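/- Let p ≥ 2, Σ finite with bijection Frob, k ∈ ℤ^Σ with k_τ > 0 for all τ, M and 𝑀̃ as defined. Fix μ ∈ 𝑀̃ and define k^μ = k + Σ_{τ∈M∖{μ}} (p·e_{Frob⁻¹∘τ} − e_τ) + (p·e_{Frob⁻¹∘μ} + e_μ). Then k^μ_τ ≥ 2 for all τ ∈ Σ, i.e. k^μ is algebraic. -/

import Mathlib

/-!
Every `μ ∈ M̃` lies in `M`: in the second case of `M̃`, `k (Frob⁻¹ μ) = 1` already puts `μ` in `M`.
Hence `k^μ = (k + ∑_{τ ∈ M} k_{Ha_τ}) + 2 e_μ`, and it suffices that `k + ∑_{τ ∈ M} k_{Ha_τ}` is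
algebraic. At `τ` this weight is `k τ + p [Frob τ ∈ M] - [τ ∈ M]`. If `Frob τ ∈ M` it is at least
`1 + p - 1 ≥ 2`. Otherwise `k τ ≠ 1`, since `k τ = 1` forces `Frob τ ∈ M`, and if moreover `τ ∈ M`
then `k τ ≠ 2`, since a chain of `2`s ending in a `1` can be prolonged by `k τ = 2`.
-/

/-- The set `M`: `τ` such that for some `s ≥ 1`, `k (Frob⁻ʲ τ) = 2` for `1 ≤ j ≤ s-1`
and `k (Frob⁻ˢ τ) = 1`. -/
def MPred {S : Type*} (Frob : Equiv.Perm S) (k : S → ℤ) (τ : S) : Prop :=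
  ∃ s : ℕ, 1 ≤ s ∧ (∀ j : ℕ, 1 ≤ j → j < s → k ((⇑Frob.symm)^[j] τ) = 2) ∧
    k ((⇑Frob.symm)^[s] τ) = 1

/-- The set `M̃`. -/
def MtPred {S : Type*} (Frob : Equiv.Perm S) (k : S → ℤ) (τ : S) : Prop :=
  (3 ≤ k τ ∧ MPred Frob k τ) ∨
  (k τ = 2 ∧ k (Frob.symm τ) = 1 ∧
    (k ((⇑Frob.symm)^[2] τ) = 1 ∨ k ((⇑Frob.symm)^[2] τ) = 2) ∧
    (k ((⇑Frob.symm)^[2] τ) = 2 → MPred Frob k ((⇑Frob.symm)^[2] τ)))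

/-- The weight `k_{Ha_τ} = p·e_{Frob⁻¹∘τ} − e_τ` of the partial Hasse invariant. -/
def kHa {S : Type*} [DecidableEq S] (p : ℕ) (Frob : Equiv.Perm S) (τ : S) : S → ℤ :=
  (p : ℤ) • Pi.single (Frob.symm τ) (1 : ℤ) - Pi.single τ (1 : ℤ)

lemma Equiv.iterate_symm_succ_apply_apply {α : Type*} (e : α ≃ α) (n : ℕ) (a : α) :
    (⇑e.symm)^[n + 1] (e a) = (⇑e.symm)^[n] a := by
  rw [Function.iterate_succ_apply, Equiv.symm_apply_apply]

section MPred

variable {S : Type*} (Frob : Equiv.Perm S) (k : S → ℤ) (τ : S)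

lemma MPred.apply_of_eq_one (h : k τ = 1) : MPred Frob k (Frob τ) :=
  ⟨1, le_rfl, fun _ hj₁ hj₂ => absurd hj₂ (not_lt.2 hj₁), by simpa using h⟩

lemma MPred.apply_of_eq_two (h : k τ = 2) (hτ : MPred Frob k τ) : MPred Frob k (Frob τ) := by
  obtain ⟨s, -, hchain, hend⟩ := hτ
  refine ⟨s + 1, by omega, fun j hj₁ hjs => ?_, ?_⟩
  · obtain ⟨j, rfl⟩ : ∃ i, j = i + 1 := ⟨j - 1, by omega⟩
    rw [Equiv.iterate_symm_succ_apply_apply]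
    rcases Nat.eq_zero_or_pos j with rfl | hj
    · exact h
    · exact hchain j hj (by omega)
  · rwa [Equiv.iterate_symm_succ_apply_apply]

lemma MtPred.mPred (h : MtPred Frob k τ) : MPred Frob k τ := by
  rcases h with ⟨-, hτ⟩ | ⟨-, h₁, -⟩
  · exact hτ
  · simpa using MPred.apply_of_eq_one Frob k (Frob.symm τ) h₁

end MPred

section kHa

variable {S : Type*} [DecidableEq S] (p : ℕ) (Frob : Equiv.Perm S)

lemma sum_kHa_apply (T : Finset S) (σ : S) :
    (∑ τ ∈ T, kHa p Frob τ) σ = (if Frob σ ∈ T then (p : ℤ) else 0) - if σ ∈ T then 1 else 0 := by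
  have hsymm : ∀ τ, (σ = Frob.symm τ) = (Frob σ = τ) := fun τ => by
    rw [eq_iff_iff, Equiv.eq_symm_apply]
  simp only [Finset.sum_apply, kHa, Pi.sub_apply, Pi.smul_apply, Pi.single_apply, smul_eq_mul,
    mul_ite, mul_one, mul_zero, hsymm, Finset.sum_sub_distrib, Finset.sum_ite_eq]

lemma sum_erase_kHa_add_theta_shift {T : Finset S} {μ : S} (hμ : μ ∈ T) :
    ∑ τ ∈ T.erase μ, kHa p Frob τ
        + ((p : ℤ) • Pi.single (Frob.symm μ) (1 : ℤ) + Pi.single μ (1 : ℤ))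
      = ∑ τ ∈ T, kHa p Frob τ + (2 : ℤ) • Pi.single μ (1 : ℤ) := by
  rw [← Finset.sum_erase_add T _ hμ, kHa]
  module

theorem two_le_add_sum_kHa {p : ℕ} (hp : 2 ≤ p) {k : S → ℤ} (hpos : ∀ τ, 0 < k τ)
    {M : Finset S} (hM : ∀ τ, τ ∈ M ↔ MPred Frob k τ) (τ : S) :
    2 ≤ (k + ∑ σ ∈ M, kHa p Frob σ) τ := by
  rw [Pi.add_apply, sum_kHa_apply]
  by_cases hFτ : Frob τ ∈ M
  · have := hpos τ
    split_ifs <;> omega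
  · have h₁ : k τ ≠ 1 := fun h => hFτ ((hM _).2 (MPred.apply_of_eq_one Frob k τ h))
    have h₂ : τ ∈ M → k τ ≠ 2 := fun hτ h =>
      hFτ ((hM _).2 (MPred.apply_of_eq_two Frob k τ h ((hM τ).1 hτ)))
    have := hpos τ
    split_ifs with hτ
    · have := h₂ hτ
      omega
    · omega

end kHa

theorem kmu_algebraic_general {S : Type*} [DecidableEq S] (p : ℕ) (hp : 2 ≤ p)
    (Frob : Equiv.Perm S) (k : S → ℤ) (hpos : ∀ τ : S, 0 < k τ)
    (M : Finset S) (hM : ∀ τ : S, τ ∈ M ↔ MPred Frob k τ)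
    (μ : S) (hμ : MtPred Frob k μ)
    (kmu : S → ℤ)
    (hkmu : kmu = k + ∑ τ ∈ M.erase μ, kHa p Frob τ
        + ((p : ℤ) • Pi.single (Frob.symm μ) (1 : ℤ) + Pi.single μ (1 : ℤ))) :
    ∀ τ : S, 2 ≤ kmu τ := by
  intro τ
  have hμM : μ ∈ M := (hM μ).2 (hμ.mPred Frob k μ)
  have hshift : 0 ≤ ((2 : ℤ) • Pi.single μ (1 : ℤ) : S → ℤ) τ := by
    simp only [Pi.smul_apply, Pi.single_apply, smul_eq_mul]
    split_ifs <;> norm_num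
  rw [hkmu, add_assoc, sum_erase_kHa_add_theta_shift p Frob hμM, ← add_assoc, Pi.add_apply]
  linarith [two_le_add_sum_kHa Frob hp hpos hM τ]

/-- For `μ ∈ M̃`, the weight `k^μ = k + ∑_{τ ∈ M ∖ {μ}} k_{Ha_τ} + (p·e_{Frob⁻¹∘μ} + e_μ)`
is algebraic. -/
theorem kmu_algebraic {S : Type*} [Fintype S] [DecidableEq S] (p : ℕ) (hp : 2 ≤ p)
    (Frob : Equiv.Perm S) (k : S → ℤ) (hpos : ∀ τ : S, 0 < k τ)
    (M : Finset S) (hM : ∀ τ : S, τ ∈ M ↔ MPred Frob k τ)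
    (μ : S) (hμ : MtPred Frob k μ)
    (kmu : S → ℤ)
    (hkmu : kmu = k + ∑ τ ∈ M.erase μ, kHa p Frob τ
        + ((p : ℤ) • Pi.single (Frob.symm μ) (1 : ℤ) + Pi.single μ (1 : ℤ))) :
    ∀ τ : S, 2 ≤ kmu τ :=
  kmu_algebraic_general p hp Frob k hpos M hM μ hμ kmu hkmu
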